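/- Let k ≥ 1 be a natural number, κ ≥ 1, λ₂ > 0, c > 0, and let σ, β : Fin k → ℝ be positive with σ nonincreasing, σ(0) = 1, σ(k−1) = 1/κ, β nondecreasing, and j ↦ σ_j² β_j nonincreasing. Define β'(j) = ((σ_j β_j)² + λ₂)/(c σ_j² β_j), and set a = β(k−1)² and t = β(k−1)/β(0). Then (max_j β'(j))/(min_j β'(j)) = (a + λ₂ κ²) t / (a + λ₂ t²). -/
import Mathlib


/-- Condition-number recurrence (Eq. (A1)) of Appendix A of the paper: with
`a = β(k−1)²` and `t = β(k−1)/β(0)`, the ratio of the largest to the smallest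
updated amplitude equals `(a + λ₂ κ²) t / (a + λ₂ t²)`. -/
theorem aop_condition_number_recurrence
    (k : ℕ) (hk : 1 ≤ k) (κ lam2 c : ℝ)
    (hκ : 1 ≤ κ) (hlam2 : 0 < lam2) (hc : 0 < c)
    (σ β : Fin k → ℝ)
    (hσpos : ∀ j, 0 < σ j) (hβpos : ∀ j, 0 < β j)
    (hσanti : Antitone σ)
    (hσ0 : σ ⟨0, by omega⟩ = 1) (hσlast : σ ⟨k - 1, by omega⟩ = 1 / κ)
    (hβmono : Monotone β)
    (hanti : Antitone (fun j => σ j ^ 2 * β j))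
    (β' : Fin k → ℝ)
    (hβ' : ∀ j, β' j = ((σ j * β j) ^ 2 + lam2) / (c * σ j ^ 2 * β j))
    (a t : ℝ)
    (ha : a = (β ⟨k - 1, by omega⟩) ^ 2)
    (ht : t = β ⟨k - 1, by omega⟩ / β ⟨0, by omega⟩) :
    (Finset.univ.sup' ⟨⟨0, by omega⟩, Finset.mem_univ _⟩ β')
        / (Finset.univ.inf' ⟨⟨0, by omega⟩, Finset.mem_univ _⟩ β')
      = (a + lam2 * κ ^ 2) * t / (a + lam2 * t ^ 2) := by
  have hκpos : 0 < κ := lt_of_lt_of_le one_pos hκ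
  set j0 : Fin k := ⟨0, by omega⟩
  set jl : Fin k := ⟨k - 1, by omega⟩
  have hsbpos : ∀ j, 0 < σ j ^ 2 * β j := fun j =>
    mul_pos (pow_pos (hσpos j) 2) (hβpos j)
  -- alternative form of β'
  have hβ'alt : ∀ j, β' j = β j / c + (lam2 / c) * (1 / (σ j ^ 2 * β j)) := by
    intro j
    rw [hβ' j]
    have h1 := (hσpos j).ne'
    have h2 := (hβpos j).ne'
    have h3 := hc.ne'
    field_simp
  -- β' is monotone
  have hmono : Monotone β' := by
    intro i j hij
    rw [hβ'alt i, hβ'alt j]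
    have h1 : β i / c ≤ β j / c :=
      by gcongr; exact hβmono hij
    have h2 : 1 / (σ i ^ 2 * β i) ≤ 1 / (σ j ^ 2 * β j) := by
      exact one_div_le_one_div_of_le (hsbpos j) (hanti hij)
    have h3 : 0 ≤ lam2 / c := le_of_lt (div_pos hlam2 hc)
    exact add_le_add h1 (mul_le_mul_of_nonneg_left h2 h3)
  have hle : ∀ j : Fin k, j0 ≤ j := fun j => by
    simp only [j0, Fin.le_def]; omega
  have hge : ∀ j : Fin k, j ≤ jl := fun j => by
    simp only [jl, Fin.le_def]; omega
  have hsup : (Finset.univ.sup' ⟨j0, Finset.mem_univ _⟩ β') = β' jl := by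
    apply le_antisymm
    · exact Finset.sup'_le _ _ fun j _ => hmono (hge j)
    · exact Finset.le_sup' β' (Finset.mem_univ jl)
  have hinf : (Finset.univ.inf' ⟨j0, Finset.mem_univ _⟩ β') = β' j0 := by
    apply le_antisymm
    · exact Finset.inf'_le β' (Finset.mem_univ j0)
    · exact Finset.le_inf' _ _ fun j _ => hmono (hle j)
  rw [hsup, hinf, hβ' jl, hβ' j0, hσlast, hσ0, ha, ht]
  have hb0 := hβpos j0
  have hbl := hβpos jl
  set b0 := β j0
  set bl := β jl
  have h1 : b0 ≠ 0 := hb0.ne'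
  have h2 : bl ≠ 0 := hbl.ne'
  have h3 : c ≠ 0 := hc.ne'
  have h4 : κ ≠ 0 := hκpos.ne'
  have h5 : (1 : ℝ) ^ 2 + lam2 ≠ 0 := by positivity
  have h6 : b0 ^ 2 + lam2 ≠ 0 := by positivity
  have h7 : bl ^ 2 + lam2 * (bl / b0) ^ 2 ≠ 0 := by positivity
  field_simp
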